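/- arXiv:2509.08278 — 11 statements merged into one kernel-verified Lean document; each statement's English description precedes it below -/
import Mathlib

section
/- In a transposed Poisson algebra A, the Lie bracket restricted to the transposed Poisson center A^A is identically zero: {b,b'} = 0 for all b,b' ∈ A^A. -/
open TensorProduct

/-- A transposed Poisson algebra structure on a commutative unital `k`-algebra `A`:
a Lie bracket satisfying the transposed Leibniz rule `2a{b,c} = {ab,c} + {b,ac}`. -/
structure TPA (k A : Type*) [Field k] [CharZero k] [CommRing A] [Algebra k A] where
  br : A →ₗ[k] A →ₗ[k] A
  skew : ∀ a b, br a b = - br b a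
  jacobi : ∀ a b c, br a (br b c) = br (br a b) c + br b (br a c)
  leibniz : ∀ a b c, 2 * a * br b c = br (a * b) c + br b (a * c)

/-- The transposed Poisson center `A^A = {b | b{a,a'} = {ba,a'} for all a,a'}`. -/
def TPA.center {k A : Type*} [Field k] [CharZero k] [CommRing A] [Algebra k A]
    (P : TPA k A) : Set A := {b | ∀ a a', b * P.br a a' = P.br (b * a) a'}

namespace TPA

variable {k A : Type*} [Field k] [CharZero k] [CommRing A] [Algebra k A] (P : TPA k A)

/-- The transposed Leibniz rule at `b = 1` reads `2c{1,a} = {c,a} + {1,ca}`, and `c{1,a} = {c,a}`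
for central `c`. -/
lemma br_eq_br_one_mul_of_mem_center {c : A} (hc : c ∈ P.center) (a : A) :
    P.br c a = P.br 1 (c * a) := by
  have leibniz_one := P.leibniz c 1 a
  have central_one := hc 1 a
  rw [mul_one] at leibniz_one central_one
  linear_combination leibniz_one - 2 * central_one

lemma br_comm_of_mem_center {b b' : A} (hb : b ∈ P.center) (hb' : b' ∈ P.center) :
    P.br b b' = P.br b' b := by
  rw [P.br_eq_br_one_mul_of_mem_center hb, P.br_eq_br_one_mul_of_mem_center hb', mul_comm]

end TPA

theorem center_bracket_trivial {k A : Type*} [Field k] [CharZero k]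
    [CommRing A] [Algebra k A] (P : TPA k A) (b b' : A)
    (hb : b ∈ P.center) (hb' : b' ∈ P.center) :
    P.br b b' = 0 := by
  have : IsAddTorsionFree A := .of_isTorsionFree k A
  exact self_eq_neg.mp ((P.br_comm_of_mem_center hb hb').trans (P.skew b' b))
end

section
/- In a transposed Poisson algebra A, the transposed Poisson center A^A is a transposed Poisson subalgebra of A (it is a subalgebra of the associative algebra and a Lie subalgebra). -/
/-!
Putting `b = 1` in the transposed Leibniz rule and symmetrising in `a, c` shows that
`D = {1, ·}` is a derivation of `A` and that `{a, c} = a D(c) - c D(a)`. Hence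
`A^A = ker D`, the kernel of a derivation is a subalgebra, and the bracket vanishes on `ker D`.
-/

open TensorProduct

namespace Derivation

variable {R A M : Type*} [CommSemiring R] [CommSemiring A] [Algebra R A] [AddCommMonoid M]
  [Module A M] [Module R M]

def kerSubalgebra (D : Derivation R A M) : Subalgebra R A where
  carrier := {a | D a = 0}
  mul_mem' {a b} (ha : D a = 0) (hb : D b = 0) := by
    show D (a * b) = 0
    rw [D.leibniz, ha, hb, smul_zero, smul_zero, add_zero]
  add_mem' {a b} (ha : D a = 0) (hb : D b = 0) := by
    show D (a + b) = 0
    rw [map_add, ha, hb, add_zero]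
  algebraMap_mem' := D.map_algebraMap

end Derivation

theorem isUnit_two_of_charZero (k A : Type*) [Field k] [CharZero k] [Semiring A] [Algebra k A] :
    IsUnit (2 : A) := by
  simpa only [map_ofNat] using (IsUnit.mk0 (2 : k) two_ne_zero).map (algebraMap k A)

namespace TPA

variable {k A : Type*} [Field k] [CharZero k] [CommRing A] [Algebra k A] (P : TPA k A)

theorem br_one_mul (a c : A) : P.br 1 (a * c) = a * P.br 1 c + c * P.br 1 a := by
  refine (isUnit_two_of_charZero k A).mul_left_cancel ?_
  have hac := P.leibniz a 1 c
  have hca := P.leibniz c 1 a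
  rw [mul_one] at hac hca
  rw [mul_comm c a] at hca
  linear_combination -hac - hca - P.skew a c

def derivOne : Derivation k A A :=
  Derivation.mk' (P.br 1) fun a c => by simpa only [smul_eq_mul] using P.br_one_mul a c

theorem br_one_one : P.br 1 1 = 0 :=
  P.derivOne.map_one_eq_zero

theorem br_eq_sub (a c : A) : P.br a c = a * P.br 1 c - c * P.br 1 a := by
  have h := P.leibniz a 1 c
  rw [mul_one] at h
  linear_combination -h - P.br_one_mul a c

theorem mem_center_iff (b : A) : b ∈ P.center ↔ P.br 1 b = 0 := by
  constructor
  · intro hb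
    have h := hb 1 1
    rw [mul_one, P.br_one_one, mul_zero] at h
    linear_combination P.skew b 1 + h
  · intro hb a a'
    rw [P.br_eq_sub a a', P.br_eq_sub (b * a) a', P.br_one_mul, hb]
    ring

theorem center_eq_kerSubalgebra : P.center = P.derivOne.kerSubalgebra := by
  ext b
  exact P.mem_center_iff b

theorem br_eq_zero_of_mem_center {b b' : A} (hb : b ∈ P.center) (hb' : b' ∈ P.center) :
    P.br b b' = 0 := by
  rw [P.br_eq_sub, (P.mem_center_iff b).1 hb, (P.mem_center_iff b').1 hb', mul_zero, mul_zero,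
    sub_zero]

end TPA

theorem center_is_subalgebra {k A : Type*} [Field k] [CharZero k]
    [CommRing A] [Algebra k A] (P : TPA k A) :
    (1 : A) ∈ P.center ∧
    (∀ b b' : A, b ∈ P.center → b' ∈ P.center → b + b' ∈ P.center) ∧
    (∀ (r : k) (b : A), b ∈ P.center → r • b ∈ P.center) ∧
    (∀ b b' : A, b ∈ P.center → b' ∈ P.center → b * b' ∈ P.center) ∧
    (∀ b b' : A, b ∈ P.center → b' ∈ P.center → P.br b b' ∈ P.center) := by
  have hbr : ∀ b b' : A, b ∈ P.center → b' ∈ P.center → P.br b b' ∈ P.center :=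
    fun b b' hb hb' => P.br_eq_zero_of_mem_center hb hb' ▸ (P.mem_center_iff 0).2 (map_zero _)
  rw [P.center_eq_kerSubalgebra] at hbr ⊢
  exact ⟨one_mem _, fun _ _ => add_mem, fun r _ hb => Subalgebra.smul_mem _ hb r,
    fun _ _ => mul_mem, hbr⟩
end

section
/- Let M be a transposed Poisson A-module over a transposed Poisson algebra A. If b ∈ A^A and m ∈ M^A, then b ⊳ m = 0 (the Lie action of b on m vanishes). -/
open TensorProduct

/-- A transposed Poisson `A`-module: an `A`-module action `sm` and a Lie `A`-module
action `lact` satisfying `2{a,b}·m = a⊳(b·m) − b⊳(a·m)` and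
`2a·(b⊳m) = (ab)⊳m + b⊳(a·m)`. -/
structure TPMod (k A : Type*) [Field k] [CharZero k] [CommRing A] [Algebra k A]
    (P : TPA k A) (M : Type*) [AddCommGroup M] [Module k M] where
  sm : A →ₗ[k] M →ₗ[k] M
  lact : A →ₗ[k] M →ₗ[k] M
  sm_one : ∀ m, sm 1 m = m
  sm_mul : ∀ a b m, sm (a * b) m = sm a (sm b m)
  lact_br : ∀ a b m, lact (P.br a b) m = lact a (lact b m) - lact b (lact a m)
  compat1 : ∀ a b m, 2 • sm (P.br a b) m = lact a (sm b m) - lact b (sm a m)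
  compat2 : ∀ a b m, 2 • sm a (lact b m) = lact (a * b) m + lact b (sm a m)

/-
In characteristic zero the skew bracket is alternating, so `{1,1} = 0`, and hence
`{b,1} = b{1,1} = 0` for `b ∈ A^A`. For `m ∈ M^A`, the invariance condition with `a' = 1` reads
`{a,1}·m = a ⊳ m`; taking `a = b` gives `b ⊳ m = 0·m = 0`.
-/

namespace TPA

variable {k A : Type*} [Field k] [CharZero k] [CommRing A] [Algebra k A] (P : TPA k A)

theorem br_self (a : A) : P.br a a = 0 := by
  have h : (2 : k) • P.br a a = 0 := by
    rw [two_smul]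
    nth_rewrite 1 [P.skew]
    exact neg_add_cancel _
  exact (smul_eq_zero.mp h).resolve_left two_ne_zero

theorem br_one_right_of_mem_center {b : A} (hb : b ∈ P.center) : P.br b 1 = 0 := by
  simpa [br_self] using (hb 1 1).symm

end TPA

namespace TPMod

variable {k A : Type*} [Field k] [CharZero k] [CommRing A] [Algebra k A] {P : TPA k A}
  {M : Type*} [AddCommGroup M] [Module k M] (Pm : TPMod k A P M)

/-- The paper's `M^A`. -/
def invariants : Set M := {m | ∀ a a', Pm.sm (P.br a a') m = Pm.lact a (Pm.sm a' m)}

theorem lact_eq_sm_br_one_of_mem_invariants {m : M} (hm : m ∈ Pm.invariants) (a : A) :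
    Pm.lact a m = Pm.sm (P.br a 1) m := by
  rw [hm a 1, Pm.sm_one]

end TPMod

theorem center_lact_invariant_eq_zero {k A : Type*} [Field k] [CharZero k]
    [CommRing A] [Algebra k A] (P : TPA k A) {M : Type*} [AddCommGroup M]
    [Module k M] (Pm : TPMod k A P M) (b : A) (hb : b ∈ P.center) (m : M)
    (hm : ∀ a a' : A, Pm.sm (P.br a a') m = Pm.lact a (Pm.sm a' m)) :
    Pm.lact b m = 0 := by
  rw [Pm.lact_eq_sm_br_one_of_mem_invariants hm, P.br_one_right_of_mem_center hb,
    map_zero, LinearMap.zero_apply]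
end

section
/- Let H be a commutative Hopf algebra, A a right H-comodule transposed Poisson algebra, and N a transposed Poisson A-module. Then N ⊗ H is a transposed Poisson A-module with actions a·(n⊗h) = a₍₀₎·n ⊗ a₍₁₎h and a⊳(n⊗h) = a₍₀₎⊳n ⊗ a₍₁₎h; in particular these actions satisfy the two compatibility identities 2{a,a'}·(n⊗h) = a⊳(a'·(n⊗h)) − a'⊳(a·(n⊗h)) and 2a·(a'⊳(n⊗h)) = (aa')⊳(n⊗h) + a'⊳(a·(n⊗h)). -/
open TensorProduct

/-!
Both identities hold with `ρ a, ρ a'` replaced by arbitrary `u, v ∈ A ⊗ H`, where the bracket of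
`A ⊗ H` is `{a ⊗ h, b ⊗ g} = {a, b} ⊗ hg`: on pure tensors they are the compatibilities of `N`
tensored with the commutativity of `H`, and they extend by trilinearity. Since `ρ` is multiplicative
and bracket-preserving, taking `u = ρ a`, `v = ρ a'` gives the theorem.
-/

namespace TPMod

variable {k A H N : Type*} [Field k] [CharZero k] [CommRing A] [Algebra k A]
  [CommRing H] [Algebra k H] [AddCommGroup N] [Module k N] {P : TPA k A} (Pm : TPMod k A P N)

theorem map₂_compat1 (u v : A ⊗[k] H) (x : N ⊗[k] H) :
    2 • map₂ Pm.sm (LinearMap.mul k H) (map₂ P.br (LinearMap.mul k H) u v) x =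
      map₂ Pm.lact (LinearMap.mul k H) u (map₂ Pm.sm (LinearMap.mul k H) v x) -
        map₂ Pm.lact (LinearMap.mul k H) v (map₂ Pm.sm (LinearMap.mul k H) u x) := by
  induction u using TensorProduct.induction_on with
  | zero => simp
  | add u₁ u₂ h₁ h₂ => simp only [map_add, LinearMap.add_apply, smul_add, h₁, h₂]; abel
  | tmul a h =>
    induction v using TensorProduct.induction_on with
    | zero => simp
    | add v₁ v₂ h₁ h₂ => simp only [map_add, LinearMap.add_apply, smul_add, h₁, h₂]; abel
    | tmul b g =>
      induction x using TensorProduct.induction_on with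
      | zero => simp
      | add x₁ x₂ h₁ h₂ => simp only [map_add, smul_add, h₁, h₂]; abel
      | tmul m t =>
        simp only [map₂_apply_tmul, map_tmul, LinearMap.mul_apply']
        rw [mul_left_comm g h t, ← sub_tmul, ← Pm.compat1, smul_tmul', mul_assoc]

theorem map₂_compat2 (u v : A ⊗[k] H) (x : N ⊗[k] H) :
    2 • map₂ Pm.sm (LinearMap.mul k H) u (map₂ Pm.lact (LinearMap.mul k H) v x) =
      map₂ Pm.lact (LinearMap.mul k H) (u * v) x +
        map₂ Pm.lact (LinearMap.mul k H) v (map₂ Pm.sm (LinearMap.mul k H) u x) := by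
  induction u using TensorProduct.induction_on with
  | zero => simp
  | add u₁ u₂ h₁ h₂ => simp only [map_add, add_mul, LinearMap.add_apply, smul_add, h₁, h₂]; abel
  | tmul a h =>
    induction v using TensorProduct.induction_on with
    | zero => simp
    | add v₁ v₂ h₁ h₂ => simp only [map_add, mul_add, LinearMap.add_apply, smul_add, h₁, h₂]; abel
    | tmul b g =>
      induction x using TensorProduct.induction_on with
      | zero => simp
      | add x₁ x₂ h₁ h₂ => simp only [map_add, smul_add, h₁, h₂]; abel
      | tmul m t =>
        simp only [map₂_apply_tmul, map_tmul, LinearMap.mul_apply',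
          Algebra.TensorProduct.tmul_mul_tmul]
        rw [mul_left_comm g h t, mul_assoc, ← add_tmul, ← Pm.compat2, smul_tmul']

end TPMod

theorem tensor_with_H_is_TPMod_general {k A H : Type*} [Field k] [CharZero k]
    [CommRing A] [Algebra k A] [CommRing H] [HopfAlgebra k H] (P : TPA k A)
    (ρA : A →ₗ[k] A ⊗[k] H)
    -- `A` is an `H`-comodule algebra
    (hAmul : ∀ a b : A, ρA (a * b) = ρA a * ρA b)
    -- compatibility of the coaction with the bracket: `ρ({a,a'}) = {a₀,a'₀} ⊗ a₁a'₁`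
    (hAbr : ∀ a b : A, ρA (P.br a b) =
      TensorProduct.map₂ P.br (LinearMap.mul k H) (ρA a) (ρA b))
    {N : Type*} [AddCommGroup N] [Module k N] (Pm : TPMod k A P N) :
    -- the actions `a · (n ⊗ h) = a₀·n ⊗ a₁h` and `a ⊳ (n ⊗ h) = a₀⊳n ⊗ a₁h`
    -- on `N ⊗ H` satisfy the two transposed-Poisson-module compatibilities
    ∀ (a a' : A) (x : N ⊗[k] H),
      (2 • TensorProduct.map₂ Pm.sm (LinearMap.mul k H) (ρA (P.br a a')) x =
        TensorProduct.map₂ Pm.lact (LinearMap.mul k H) (ρA a)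
          (TensorProduct.map₂ Pm.sm (LinearMap.mul k H) (ρA a') x) -
        TensorProduct.map₂ Pm.lact (LinearMap.mul k H) (ρA a')
          (TensorProduct.map₂ Pm.sm (LinearMap.mul k H) (ρA a) x)) ∧
      (2 • TensorProduct.map₂ Pm.sm (LinearMap.mul k H) (ρA a)
          (TensorProduct.map₂ Pm.lact (LinearMap.mul k H) (ρA a') x) =
        TensorProduct.map₂ Pm.lact (LinearMap.mul k H) (ρA (a * a')) x +
        TensorProduct.map₂ Pm.lact (LinearMap.mul k H) (ρA a')
          (TensorProduct.map₂ Pm.sm (LinearMap.mul k H) (ρA a) x)) := by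
  intro a a' x
  exact ⟨hAbr a a' ▸ Pm.map₂_compat1 (ρA a) (ρA a') x,
    hAmul a a' ▸ Pm.map₂_compat2 (ρA a) (ρA a') x⟩

theorem tensor_with_H_is_TPMod {k A H : Type*} [Field k] [CharZero k]
    [CommRing A] [Algebra k A] [CommRing H] [HopfAlgebra k H] (P : TPA k A)
    (ρA : A →ₗ[k] A ⊗[k] H)
    -- `ρA` is a comodule structure map on `A`
    (hAcoassoc : ∀ a : A,
      (TensorProduct.assoc k A H H) ((TensorProduct.map ρA LinearMap.id) (ρA a)) =
        (TensorProduct.map LinearMap.id (Coalgebra.comul (R := k))) (ρA a))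
    (hAcounit : ∀ a : A,
      (TensorProduct.rid k A)
        ((TensorProduct.map LinearMap.id (Coalgebra.counit (R := k))) (ρA a)) = a)
    -- `A` is an `H`-comodule algebra
    (hAone : ρA 1 = 1) (hAmul : ∀ a b : A, ρA (a * b) = ρA a * ρA b)
    -- compatibility of the coaction with the bracket: `ρ({a,a'}) = {a₀,a'₀} ⊗ a₁a'₁`
    (hAbr : ∀ a b : A, ρA (P.br a b) =
      TensorProduct.map₂ P.br (LinearMap.mul k H) (ρA a) (ρA b))
    {N : Type*} [AddCommGroup N] [Module k N] (Pm : TPMod k A P N) :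
    -- the actions `a · (n ⊗ h) = a₀·n ⊗ a₁h` and `a ⊳ (n ⊗ h) = a₀⊳n ⊗ a₁h`
    -- on `N ⊗ H` satisfy the two transposed-Poisson-module compatibilities
    ∀ (a a' : A) (x : N ⊗[k] H),
      (2 • TensorProduct.map₂ Pm.sm (LinearMap.mul k H) (ρA (P.br a a')) x =
        TensorProduct.map₂ Pm.lact (LinearMap.mul k H) (ρA a)
          (TensorProduct.map₂ Pm.sm (LinearMap.mul k H) (ρA a') x) -
        TensorProduct.map₂ Pm.lact (LinearMap.mul k H) (ρA a')
          (TensorProduct.map₂ Pm.sm (LinearMap.mul k H) (ρA a) x)) ∧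
      (2 • TensorProduct.map₂ Pm.sm (LinearMap.mul k H) (ρA a)
          (TensorProduct.map₂ Pm.lact (LinearMap.mul k H) (ρA a') x) =
        TensorProduct.map₂ Pm.lact (LinearMap.mul k H) (ρA (a * a')) x +
        TensorProduct.map₂ Pm.lact (LinearMap.mul k H) (ρA a')
          (TensorProduct.map₂ Pm.sm (LinearMap.mul k H) (ρA a) x)) :=
  tensor_with_H_is_TPMod_general P ρA hAmul hAbr Pm
end

section
/- Let A be a transposed Poisson algebra and B a subalgebra of A contained in A^A (so with trivial bracket). For any B-module M, the tensor product A ⊗_B M is well-defined with Lie A-action a'⊳(a⊗m) = {a',a}⊗m; i.e., for b ∈ B the elements {a',ab}⊗m and {a',a}⊗(b·m) agree in A⊗_B M. -/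
open TensorProduct

theorem TPA.br_mul_of_mem_center {k A : Type*} [Field k] [CharZero k] [CommRing A]
    [Algebra k A] (P : TPA k A) {b : A} (hb : b ∈ P.center) (a a' : A) :
    P.br a' (a * b) = b * P.br a' a := by
  rw [P.skew, mul_comm, ← hb, P.skew a, mul_neg, neg_neg]

theorem tensor_over_center_subalgebra_balanced {k A : Type*} [Field k]
    [CharZero k] [CommRing A] [Algebra k A] (P : TPA k A) (B : Subalgebra k A)
    (hB : ∀ b : B, (b : A) ∈ P.center) (M : Type*) [AddCommGroup M]
    [Module B M] :
    ∀ (b : B) (a a' : A) (m : M),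
      (P.br a' (a * (b : A))) ⊗ₜ[B] m = (P.br a' a) ⊗ₜ[B] (b • m) := by
  intro b a a' m
  have hbr : P.br a' (a * (b : A)) = b • P.br a' a := P.br_mul_of_mem_center (hB b) a a'
  rw [hbr, smul_tmul]
end

section
/- Let H be a Hopf algebra with bijective antipode, A a right H-comodule transposed Poisson algebra, M a transposed Poisson (A,H)-Hopf module, and φ : H → A a right H-colinear map with φ(1_H) = 1_A. Define p_M : M → M by p_M(m) = φ(S⁻¹(m₍₁₎))·m₍₀₎. Then p_M ∘ p_M = p_M and the image of p_M equals M^{coH}. -/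
open TensorProduct

/-- The projection `p_M(m) = φ(S⁻¹(m₁)) · m₀`, as the composite
`M → M ⊗ H → M` of the coaction with `m ⊗ h ↦ φ(S⁻¹(h)) · m`. -/
noncomputable def pMap {k H A M : Type*} [Field k] [CharZero k] [CommRing A]
    [Algebra k A] [Ring H] [HopfAlgebra k H] [AddCommGroup M] [Module k M]
    (sm : A →ₗ[k] M →ₗ[k] M) (φ : H →ₗ[k] A) (Sinv : H →ₗ[k] H)
    (ρM : M →ₗ[k] M ⊗[k] H) : M →ₗ[k] M :=
  (TensorProduct.lift ((sm.comp (φ.comp Sinv)).flip)).comp ρM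

open Coalgebra HopfAlgebra LinearMap

namespace TPAux

variable {k H : Type*} [CommSemiring k] [Semiring H] [HopfAlgebra k H]

lemma sum_counit_smul_eq {x : H} (r : Repr k x (H × H)) :
    ∑ i ∈ r.index, counit (R := k) (r.left i) • r.right i = x := by
  have h := congrArg (TensorProduct.lid k H) (sum_counit_tmul_eq r)
  rw [map_sum] at h
  simp only [lid_tmul, one_smul] at h
  exact h

lemma sum_smul_counit_eq {x : H} (r : Repr k x (H × H)) :
    ∑ i ∈ r.index, counit (R := k) (r.right i) • r.left i = x := by
  have h := congrArg (TensorProduct.rid k H) (sum_tmul_counit_eq r)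
  rw [map_sum] at h
  simp only [rid_tmul, one_smul] at h
  exact h

lemma antipode_one' : antipode (R := k) (1 : H) = 1 := by
  have h := mul_antipode_rTensor_comul_apply (R := k) (a := (1 : H))
  simpa [Bialgebra.comul_one, Bialgebra.counit_one, Algebra.TensorProduct.one_def] using h

lemma counit_antipode' (x : H) :
    counit (R := k) (antipode (R := k) x) = counit (R := k) x := by
  have r := ℛ k x
  have h := congrArg (counit (R := k)) (sum_antipode_mul_eq_smul r)
  rw [map_sum, map_smul] at h
  simp only [Bialgebra.counit_mul, Bialgebra.counit_one, smul_eq_mul, mul_one] at h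
  calc counit (R := k) (antipode (R := k) x)
      = counit (R := k) (antipode (R := k)
          (∑ i ∈ r.index, counit (R := k) (r.right i) • r.left i)) := by
        rw [sum_smul_counit_eq]
    _ = ∑ i ∈ r.index,
          counit (R := k) (antipode (R := k) (r.left i)) * counit (R := k) (r.right i) := by
        rw [map_sum, map_sum]
        refine Finset.sum_congr rfl fun i _ => ?_
        rw [map_smul, map_smul, smul_eq_mul, mul_comm]
    _ = counit (R := k) x := h

lemma w_right (x : H) (r : Repr k x (H × H)) (r2 : ∀ i : r.ι, Repr k (r.right i) (H × H)) :
    (comul (R := k) (A := H)).lTensor H (comul (R := k) x) =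
      ∑ i ∈ r.index, ∑ j ∈ (r2 i).index,
        r.left i ⊗ₜ[k] ((r2 i).left j ⊗ₜ[k] (r2 i).right j) := by
  rw [← r.eq, map_sum]
  refine Finset.sum_congr rfl fun i _ => ?_
  rw [lTensor_tmul, ← (r2 i).eq, tmul_sum]

lemma w_left (x : H) (r : Repr k x (H × H)) (r1 : ∀ i : r.ι, Repr k (r.left i) (H × H)) :
    (comul (R := k) (A := H)).lTensor H (comul (R := k) x) =
      ∑ i ∈ r.index, ∑ j ∈ (r1 i).index,
        (r1 i).left j ⊗ₜ[k] ((r1 i).right j ⊗ₜ[k] r.right i) := by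
  rw [← coassoc_apply x, ← r.eq, map_sum, map_sum]
  refine Finset.sum_congr rfl fun i _ => ?_
  rw [rTensor_tmul, ← (r1 i).eq, sum_tmul, map_sum]
  exact Finset.sum_congr rfl fun j _ => by rw [assoc_tmul]

variable (k) in
/-- Convolution product of linear maps from a Hopf algebra to an algebra. -/
noncomputable def conv {B : Type*} [Semiring B] [Algebra k B] (f g : H →ₗ[k] B) : H →ₗ[k] B :=
  LinearMap.mul' k B ∘ₗ TensorProduct.map f g ∘ₗ comul

variable (k H) in
/-- Convolution unit. -/
noncomputable def cunit {B : Type*} [Semiring B] [Algebra k B] : H →ₗ[k] B :=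
  Algebra.linearMap k B ∘ₗ counit

lemma conv_repr {B : Type*} [Semiring B] [Algebra k B] (f g : H →ₗ[k] B) {x : H}
    (r : Repr k x (H × H)) :
    conv k f g x = ∑ i ∈ r.index, f (r.left i) * g (r.right i) := by
  simp only [conv, comp_apply, ← r.eq, map_sum, map_tmul, mul'_apply]

lemma cunit_apply {B : Type*} [Semiring B] [Algebra k B] (x : H) :
    cunit k H (B := B) x = counit (R := k) x • 1 := by
  simp [cunit, Algebra.algebraMap_eq_smul_one]

lemma conv_cunit_left {B : Type*} [Semiring B] [Algebra k B] (f : H →ₗ[k] B) :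
    conv k (cunit k H) f = f := by
  ext x
  rw [conv_repr _ _ (ℛ k x)]
  calc ∑ i ∈ (ℛ k x).index, cunit k H ((ℛ k x).left i) * f ((ℛ k x).right i)
      = ∑ i ∈ (ℛ k x).index, f (counit (R := k) ((ℛ k x).left i) • (ℛ k x).right i) := by
        refine Finset.sum_congr rfl fun i _ => ?_
        rw [cunit_apply, map_smul, smul_mul_assoc, one_mul]
    _ = f x := by rw [← map_sum, sum_counit_smul_eq]

lemma conv_cunit_right {B : Type*} [Semiring B] [Algebra k B] (f : H →ₗ[k] B) :
    conv k f (cunit k H) = f := by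
  ext x
  rw [conv_repr _ _ (ℛ k x)]
  calc ∑ i ∈ (ℛ k x).index, f ((ℛ k x).left i) * cunit k H ((ℛ k x).right i)
      = ∑ i ∈ (ℛ k x).index, f (counit (R := k) ((ℛ k x).right i) • (ℛ k x).left i) := by
        refine Finset.sum_congr rfl fun i _ => ?_
        rw [cunit_apply, map_smul, mul_smul_comm, mul_one]
    _ = f x := by rw [← map_sum, sum_smul_counit_eq]

lemma conv_assoc {B : Type*} [Semiring B] [Algebra k B] (f g h : H →ₗ[k] B) :
    conv k (conv k f g) h = conv k f (conv k g h) := by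
  ext x
  set T : H ⊗[k] (H ⊗[k] H) →ₗ[k] B :=
    LinearMap.mul' k B ∘ₗ TensorProduct.map f (LinearMap.mul' k B ∘ₗ TensorProduct.map g h)
    with hT
  have hTt : ∀ a b c : H, T (a ⊗ₜ[k] (b ⊗ₜ[k] c)) = f a * (g b * h c) := by
    intro a b c; simp [hT]
  set r := ℛ k x with hr
  have e1 : conv k (conv k f g) h x = T ((comul (R := k) (A := H)).lTensor H (comul (R := k) x)) := by
    rw [conv_repr _ _ r, w_left x r (fun i => ℛ k (r.left i)), map_sum]
    refine Finset.sum_congr rfl fun i _ => ?_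
    rw [conv_repr _ _ (ℛ k (r.left i)), Finset.sum_mul, map_sum]
    refine Finset.sum_congr rfl fun j _ => ?_
    rw [hTt, mul_assoc]
  have e2 : conv k f (conv k g h) x = T ((comul (R := k) (A := H)).lTensor H (comul (R := k) x)) := by
    rw [conv_repr _ _ r, w_right x r (fun i => ℛ k (r.right i)), map_sum]
    refine Finset.sum_congr rfl fun i _ => ?_
    rw [conv_repr _ _ (ℛ k (r.right i)), Finset.mul_sum, map_sum]
    refine Finset.sum_congr rfl fun j _ => ?_
    rw [hTt]
  rw [e1, e2]

variable (k H) in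
/-- `u ⊗ v ↦ S v ⊗ S u`. -/
noncomputable def gam : H ⊗[k] H →ₗ[k] H ⊗[k] H :=
  TensorProduct.map (antipode (R := k)) (antipode (R := k)) ∘ₗ (TensorProduct.comm k H H).toLinearMap

lemma gam_tmul (u v : H) :
    gam k H (u ⊗ₜ[k] v) = antipode (R := k) v ⊗ₜ[k] antipode (R := k) u := by
  simp [gam]

lemma conv_comulS :
    conv k ((comul : H →ₗ[k] H ⊗[k] H) ∘ₗ antipode (R := k)) comul = cunit k H := by
  ext x
  set r := ℛ k x with hr
  rw [conv_repr _ _ r, cunit_apply]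
  calc ∑ i ∈ r.index, ((comul : H →ₗ[k] H ⊗[k] H) ∘ₗ antipode (R := k)) (r.left i)
        * comul (r.right i)
      = ∑ i ∈ r.index,
          Bialgebra.comulAlgHom k H (antipode (R := k) (r.left i) * r.right i) := by
        refine Finset.sum_congr rfl fun i _ => ?_
        rw [map_mul]; rfl
    _ = Bialgebra.comulAlgHom k H (∑ i ∈ r.index, antipode (R := k) (r.left i) * r.right i) := by
        rw [map_sum]
    _ = Bialgebra.comulAlgHom k H (counit (R := k) x • (1 : H)) := by
        rw [sum_antipode_mul_eq_smul r]
    _ = counit (R := k) x • 1 := by rw [map_smul, map_one]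

lemma conv_comul_gam :
    conv k (comul : H →ₗ[k] H ⊗[k] H) ((gam k H) ∘ₗ comul) = cunit k H := by
  ext x
  set r := ℛ k x with hr
  set Θ : H ⊗[k] (H ⊗[k] H) →ₗ[k] H ⊗[k] H :=
    TensorProduct.lift ((LinearMap.llcomp k (H ⊗[k] H) (H ⊗[k] H) (H ⊗[k] H)).flip (gam k H)
      ∘ₗ LinearMap.mul k (H ⊗[k] H) ∘ₗ comul) with hΘ
  have hΘt : ∀ (u : H) (z : H ⊗[k] H), Θ (u ⊗ₜ[k] z) = comul (R := k) u * gam k H z := by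
    intro u z; simp [hΘ]
  -- step 0 : the convolution equals Θ applied to (1 ⊗ Δ)Δx
  have e0 : conv k (comul : H →ₗ[k] H ⊗[k] H) ((gam k H) ∘ₗ comul) x
      = Θ ((comul (R := k) (A := H)).lTensor H (comul (R := k) x)) := by
    rw [conv_repr _ _ r, w_right x r (fun i => ℛ k (r.right i)), map_sum]
    refine Finset.sum_congr rfl fun i _ => ?_
    rw [map_sum]
    calc comul (R := k) (r.left i) * ((gam k H) ∘ₗ comul) (r.right i)
        = comul (R := k) (r.left i)
            * gam k H (∑ j ∈ (ℛ k (r.right i)).index,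
                (ℛ k (r.right i)).left j ⊗ₜ[k] (ℛ k (r.right i)).right j) := by
          rw [(ℛ k (r.right i)).eq]; rfl
      _ = ∑ j ∈ (ℛ k (r.right i)).index,
            Θ (r.left i ⊗ₜ[k] ((ℛ k (r.right i)).left j ⊗ₜ[k] (ℛ k (r.right i)).right j)) := by
          rw [map_sum, Finset.mul_sum]
          exact Finset.sum_congr rfl fun j _ => (hΘt _ _).symm
  rw [e0, w_left x r (fun i => ℛ k (r.left i)), map_sum]
  -- now the hard computation
  have key : ∀ i ∈ r.index,
      Θ (∑ j ∈ (ℛ k (r.left i)).index,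
        (ℛ k (r.left i)).left j ⊗ₜ[k] ((ℛ k (r.left i)).right j ⊗ₜ[k] r.right i))
      = (r.left i * antipode (R := k) (r.right i)) ⊗ₜ[k] (1 : H) := by
    intro i _
    rw [map_sum]
    set rr := ℛ k (r.left i) with hrr
    set Ξ : (H ⊗[k] H) ⊗[k] H →ₗ[k] H ⊗[k] H :=
      TensorProduct.lift ((LinearMap.llcomp k H (H ⊗[k] H) (H ⊗[k] H)).flip
        ((TensorProduct.mk k H H (antipode (R := k) (r.right i))) ∘ₗ antipode (R := k))
        ∘ₗ LinearMap.mul k (H ⊗[k] H)) with hΞ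
    have hΞt : ∀ (z : H ⊗[k] H) (d : H),
        Ξ (z ⊗ₜ[k] d) = z * (antipode (R := k) (r.right i) ⊗ₜ[k] antipode (R := k) d) := by
      intro z d; simp [hΞ]
    have e1 : ∑ j ∈ rr.index,
        Θ (rr.left j ⊗ₜ[k] (rr.right j ⊗ₜ[k] r.right i))
        = Ξ ((comul (R := k) (A := H)).rTensor H (comul (R := k) (r.left i))) := by
      rw [← rr.eq, map_sum, map_sum]
      refine Finset.sum_congr rfl fun j _ => ?_
      rw [rTensor_tmul, hΞt, hΘt, gam_tmul]
    rw [e1, ← coassoc_symm_apply (r.left i),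
      w_right (r.left i) rr (fun j => ℛ k (rr.right j)), map_sum, map_sum]
    calc ∑ j ∈ rr.index, Ξ ((TensorProduct.assoc k H H H).symm
          (∑ l ∈ (ℛ k (rr.right j)).index,
            rr.left j ⊗ₜ[k] ((ℛ k (rr.right j)).left l ⊗ₜ[k] (ℛ k (rr.right j)).right l)))
        = ∑ j ∈ rr.index, counit (R := k) (rr.right j) •
            ((rr.left j * antipode (R := k) (r.right i)) ⊗ₜ[k] (1 : H)) := by
          refine Finset.sum_congr rfl fun j _ => ?_
          rw [map_sum, map_sum]
          calc ∑ l ∈ (ℛ k (rr.right j)).index,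
                Ξ ((TensorProduct.assoc k H H H).symm
                  (rr.left j ⊗ₜ[k] ((ℛ k (rr.right j)).left l ⊗ₜ[k] (ℛ k (rr.right j)).right l)))
              = ∑ l ∈ (ℛ k (rr.right j)).index,
                  (rr.left j * antipode (R := k) (r.right i)) ⊗ₜ[k]
                    ((ℛ k (rr.right j)).left l * antipode (R := k) ((ℛ k (rr.right j)).right l)) := by
                refine Finset.sum_congr rfl fun l _ => ?_
                rw [assoc_symm_tmul, hΞt, Algebra.TensorProduct.tmul_mul_tmul]
            _ = (rr.left j * antipode (R := k) (r.right i)) ⊗ₜ[k]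
                  (counit (R := k) (rr.right j) • (1 : H)) := by
                rw [← tmul_sum, sum_mul_antipode_eq_smul (ℛ k (rr.right j))]
            _ = counit (R := k) (rr.right j) •
                  ((rr.left j * antipode (R := k) (r.right i)) ⊗ₜ[k] (1 : H)) := by
                rw [tmul_smul]
      _ = (r.left i * antipode (R := k) (r.right i)) ⊗ₜ[k] (1 : H) := by
          have : ∀ j ∈ rr.index, counit (R := k) (rr.right j) •
              ((rr.left j * antipode (R := k) (r.right i)) ⊗ₜ[k] (1 : H))
              = ((counit (R := k) (rr.right j) • rr.left j)
                  * antipode (R := k) (r.right i)) ⊗ₜ[k] (1 : H) := by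
            intro j _
            rw [smul_tmul', smul_mul_assoc]
          rw [Finset.sum_congr rfl this, ← sum_tmul, ← Finset.sum_mul,
            sum_smul_counit_eq rr]
  rw [Finset.sum_congr rfl key, ← sum_tmul, sum_mul_antipode_eq_smul r, cunit_apply,
    Algebra.TensorProduct.one_def, smul_tmul']

lemma comul_antipode' :
    (comul : H →ₗ[k] H ⊗[k] H) ∘ₗ antipode (R := k) = (gam k H) ∘ₗ comul := by
  calc (comul : H →ₗ[k] H ⊗[k] H) ∘ₗ antipode (R := k)
      = conv k ((comul : H →ₗ[k] H ⊗[k] H) ∘ₗ antipode (R := k)) (cunit k H) :=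
        (conv_cunit_right _).symm
    _ = conv k ((comul : H →ₗ[k] H ⊗[k] H) ∘ₗ antipode (R := k))
          (conv k comul ((gam k H) ∘ₗ comul)) := by rw [conv_comul_gam]
    _ = conv k (conv k ((comul : H →ₗ[k] H ⊗[k] H) ∘ₗ antipode (R := k)) comul)
          ((gam k H) ∘ₗ comul) := (conv_assoc _ _ _).symm
    _ = conv k (cunit k H) ((gam k H) ∘ₗ comul) := by rw [conv_comulS]
    _ = (gam k H) ∘ₗ comul := conv_cunit_left _

section Sinv

variable (Sinv : H →ₗ[k] H)

lemma Sinv_one (hS1 : ∀ h : H, Sinv (antipode (R := k) h) = h) : Sinv 1 = 1 := by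
  calc Sinv 1 = Sinv (antipode (R := k) 1) := by rw [antipode_one']
    _ = 1 := hS1 1

lemma comul_Sinv (hS1 : ∀ h : H, Sinv (antipode (R := k) h) = h)
    (hS2 : ∀ h : H, antipode (R := k) (Sinv h) = h) (h : H) :
    comul (R := k) (Sinv h) =
      TensorProduct.map Sinv Sinv ((TensorProduct.comm k H H) (comul (R := k) h)) := by
  have key : ∀ z : H ⊗[k] H,
      TensorProduct.map Sinv Sinv ((TensorProduct.comm k H H) (gam k H z)) = z := by
    intro z
    induction z using TensorProduct.induction_on with
    | zero => simp
    | tmul u v => simp [gam_tmul, hS1]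
    | add a b ha hb => simp [map_add, ha, hb]
  have h2 : gam k H (comul (R := k) (Sinv h)) = comul (R := k) h := by
    have := LinearMap.congr_fun (comul_antipode' (k := k) (H := H)) (Sinv h)
    simp only [comp_apply, hS2] at this
    exact this.symm
  calc comul (R := k) (Sinv h)
      = TensorProduct.map Sinv Sinv
          ((TensorProduct.comm k H H) (gam k H (comul (R := k) (Sinv h)))) := (key _).symm
    _ = TensorProduct.map Sinv Sinv ((TensorProduct.comm k H H) (comul (R := k) h)) := by
        rw [h2]

lemma counit_Sinv (hS2 : ∀ h : H, antipode (R := k) (Sinv h) = h) (h : H) : counit (R := k) (Sinv h) = counit (R := k) h := by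
  have := counit_antipode' (k := k) (Sinv h)
  rw [hS2] at this
  exact this.symm

lemma sum_Sinv_right_mul_left (hS1 : ∀ h : H, Sinv (antipode (R := k) h) = h)
    (hS2 : ∀ h : H, antipode (R := k) (Sinv h) = h) {x : H} (r : Repr k x (H × H)) :
    ∑ i ∈ r.index, Sinv (r.right i) * r.left i = counit (R := k) x • (1 : H) := by
  have h : ∑ i ∈ r.index, Sinv (r.right i) * antipode (R := k) (Sinv (r.left i))
      = counit (R := k) (Sinv x) • (1 : H) :=
    sum_mul_antipode_eq_smul (R := k)
      ⟨r.index, fun i => Sinv (r.right i), fun i => Sinv (r.left i), by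
        rw [comul_Sinv Sinv hS1 hS2, ← r.eq]
        simp only [map_sum, comm_tmul, map_tmul]⟩
  simp only [hS2] at h
  rw [counit_Sinv Sinv hS2] at h
  exact h

end Sinv

end TPAux

open TPAux

theorem pMap_idempotent_range_coinvariants {k A H : Type*} [Field k] [CharZero k]
    [CommRing A] [Algebra k A] [Ring H] [HopfAlgebra k H] (P : TPA k A)
    (ρA : A →ₗ[k] A ⊗[k] H)
    -- `ρA` is a comodule structure map on `A`
    (hAcoassoc : ∀ a : A,
      (TensorProduct.assoc k A H H) ((TensorProduct.map ρA LinearMap.id) (ρA a)) =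
        (TensorProduct.map LinearMap.id (Coalgebra.comul (R := k))) (ρA a))
    (hAcounit : ∀ a : A,
      (TensorProduct.rid k A)
        ((TensorProduct.map LinearMap.id (Coalgebra.counit (R := k))) (ρA a)) = a)
    -- `A` is an `H`-comodule algebra
    (hAone : ρA 1 = 1) (hAmul : ∀ a b : A, ρA (a * b) = ρA a * ρA b)
    -- compatibility of the coaction with the bracket: `ρ({a,a'}) = {a₀,a'₀} ⊗ a₁a'₁`
    (hAbr : ∀ a b : A, ρA (P.br a b) =
      TensorProduct.map₂ P.br (LinearMap.mul k H) (ρA a) (ρA b))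
    {M : Type*} [AddCommGroup M] [Module k M] (Pm : TPMod k A P M)
    (ρM : M →ₗ[k] M ⊗[k] H)
    -- `ρM` is a comodule structure map on `M`
    (hMcoassoc : ∀ m : M,
      (TensorProduct.assoc k M H H) ((TensorProduct.map ρM LinearMap.id) (ρM m)) =
        (TensorProduct.map LinearMap.id (Coalgebra.comul (R := k))) (ρM m))
    (hMcounit : ∀ m : M,
      (TensorProduct.rid k M)
        ((TensorProduct.map LinearMap.id (Coalgebra.counit (R := k))) (ρM m)) = m)
    -- `M` is an `(A,H)`-Hopf module: `ρ(a·m) = a₀·m₀ ⊗ a₁m₁`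
    (hsmco : ∀ (a : A) (m : M), ρM (Pm.sm a m) =
      TensorProduct.map₂ Pm.sm (LinearMap.mul k H) (ρA a) (ρM m))
    -- compatibility of the coaction with the Lie action: `ρ(a⊳m) = a₀⊳m₀ ⊗ a₁m₁`
    (hlactco : ∀ (a : A) (m : M), ρM (Pm.lact a m) =
      TensorProduct.map₂ Pm.lact (LinearMap.mul k H) (ρA a) (ρM m))
    -- the antipode is bijective with inverse `Sinv`
    (Sinv : H →ₗ[k] H)
    (hS1 : ∀ h : H, Sinv (HopfAlgebra.antipode (R := k) h) = h)
    (hS2 : ∀ h : H, HopfAlgebra.antipode (R := k) (Sinv h) = h)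
    -- `φ : H → A` is `H`-colinear with `φ(1) = 1`
    (φ : H →ₗ[k] A) (hφone : φ 1 = 1)
    (hφcolin : ∀ h : H, ρA (φ h) =
      TensorProduct.map φ LinearMap.id (Coalgebra.comul (R := k) h)) :
    (∀ m : M, pMap Pm.sm φ Sinv ρM (pMap Pm.sm φ Sinv ρM m) =
      pMap Pm.sm φ Sinv ρM m) ∧
    Set.range (pMap Pm.sm φ Sinv ρM) = {m : M | ρM m = m ⊗ₜ[k] (1 : H)} := by
  classical
  set L : M ⊗[k] H →ₗ[k] M := TensorProduct.lift ((Pm.sm.comp (φ.comp Sinv)).flip) with hL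
  have hp : ∀ m : M, pMap Pm.sm φ Sinv ρM m = L (ρM m) := fun m => rfl
  have hLt : ∀ (m' : M) (h : H), L (m' ⊗ₜ[k] h) = Pm.sm (φ (Sinv h)) m' := by
    intro m' h; simp [hL]
  set c : H →ₗ[k] A ⊗[k] H :=
    (TensorProduct.map (φ ∘ₗ Sinv) Sinv) ∘ₗ (TensorProduct.comm k H H).toLinearMap
      ∘ₗ (Coalgebra.comul (R := k)) with hc
  have hcol : ∀ h : H, ρA (φ (Sinv h)) = c h := by
    intro h
    rw [hφcolin, TPAux.comul_Sinv Sinv hS1 hS2 h]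
    have e : ∀ z : H ⊗[k] H, TensorProduct.map φ LinearMap.id (TensorProduct.map Sinv Sinv z)
        = TensorProduct.map (φ ∘ₗ Sinv) Sinv z := by
      intro z
      induction z using TensorProduct.induction_on with
      | zero => simp
      | tmul u v => simp
      | add a b ha hb => simp [ha, hb]
    rw [e, hc]
    simp only [comp_apply, LinearEquiv.coe_coe]
  set γ : H →ₗ[k] (M ⊗[k] H) →ₗ[k] M ⊗[k] H :=
    (TensorProduct.map₂ Pm.sm (LinearMap.mul k H)) ∘ₗ c with hγ
  have hρL : ∀ (m' : M) (h : H), ρM (L (m' ⊗ₜ[k] h)) = γ h (ρM m') := by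
    intro m' h
    rw [hLt, hsmco, hcol, hγ]
    simp only [comp_apply]
  -- ρM ∘ L as a composite
  have comp1 : ρM ∘ₗ L = TensorProduct.lift (γ.flip ∘ₗ ρM) := by
    apply TensorProduct.ext'
    intro m' h
    rw [comp_apply, hρL]
    simp
  have comp2 : TensorProduct.lift (γ.flip ∘ₗ ρM)
      = TensorProduct.lift γ.flip ∘ₗ (TensorProduct.map ρM LinearMap.id) := by
    apply TensorProduct.ext'
    intro m' h
    simp
  have hco : ∀ m : M, (TensorProduct.map ρM LinearMap.id) (ρM m)
      = (TensorProduct.assoc k M H H).symm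
          ((TensorProduct.map LinearMap.id (Coalgebra.comul (R := k))) (ρM m)) :=
    fun m => (LinearEquiv.eq_symm_apply _).mpr (hMcoassoc m)
  -- the crucial pure-tensor identity
  have hpure : TensorProduct.lift γ.flip ∘ₗ ((TensorProduct.assoc k M H H).symm.toLinearMap
      ∘ₗ TensorProduct.map LinearMap.id (Coalgebra.comul (R := k)))
      = (TensorProduct.mk k M H).flip 1 ∘ₗ L := by
    apply TensorProduct.ext'
    intro m' h
    set g1 : H →ₗ[k] M := (Pm.sm.comp (φ.comp Sinv)).flip m' with hg1
    set g2 : H ⊗[k] H →ₗ[k] H := LinearMap.mul' k H ∘ₗ TensorProduct.map Sinv LinearMap.id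
      ∘ₗ (TensorProduct.comm k H H).toLinearMap with hg2
    set W : H ⊗[k] (H ⊗[k] H) →ₗ[k] M ⊗[k] H :=
      TensorProduct.map g1 g2 ∘ₗ (TensorProduct.assoc k H H H).toLinearMap
        ∘ₗ (TensorProduct.comm k H (H ⊗[k] H)).toLinearMap
        ∘ₗ (TensorProduct.assoc k H H H).toLinearMap
        ∘ₗ (TensorProduct.comm k H (H ⊗[k] H)).toLinearMap with hW
    have hWt : ∀ x u v : H,
        W (x ⊗ₜ[k] (u ⊗ₜ[k] v)) = Pm.sm (φ (Sinv v)) m' ⊗ₜ[k] (Sinv u * x) := by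
      intro x u v
      simp [hW, hg1, hg2]
    set r := ℛ k h with hr
    have lhs_eq : TensorProduct.lift γ.flip
        ((TensorProduct.assoc k M H H).symm (m' ⊗ₜ[k] Coalgebra.comul (R := k) h))
        = W ((Coalgebra.comul (R := k) (A := H)).lTensor H (Coalgebra.comul (R := k) h)) := by
      rw [w_right h r (fun i => ℛ k (r.right i)), ← r.eq, tmul_sum]
      simp only [map_sum]
      refine Finset.sum_congr rfl fun i _ => ?_
      rw [assoc_symm_tmul, lift.tmul]
      calc γ.flip (m' ⊗ₜ[k] r.left i) (r.right i)
          = TensorProduct.map₂ Pm.sm (LinearMap.mul k H) (c (r.right i))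
              (m' ⊗ₜ[k] r.left i) := by rw [flip_apply, hγ]; simp only [comp_apply]
        _ = ∑ j ∈ (ℛ k (r.right i)).index,
              W (r.left i ⊗ₜ[k] ((ℛ k (r.right i)).left j ⊗ₜ[k] (ℛ k (r.right i)).right j)) := by
            rw [hc]
            simp only [comp_apply, LinearEquiv.coe_coe]
            rw [← (ℛ k (r.right i)).eq]
            simp only [map_sum, LinearMap.sum_apply]
            refine Finset.sum_congr rfl fun j _ => ?_
            rw [comm_tmul, map_tmul, map₂_apply_tmul, map_tmul, hWt]
            simp
    rw [comp_apply, comp_apply, comp_apply, LinearEquiv.coe_coe, map_tmul, id_coe, id_eq,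
      lhs_eq, w_left h r (fun i => ℛ k (r.left i))]
    simp only [map_sum]
    have key : ∀ i ∈ r.index,
        (∑ j ∈ (ℛ k (r.left i)).index,
          W ((ℛ k (r.left i)).left j ⊗ₜ[k] ((ℛ k (r.left i)).right j ⊗ₜ[k] r.right i)))
        = Coalgebra.counit (R := k) (r.left i) •
            (Pm.sm (φ (Sinv (r.right i))) m' ⊗ₜ[k] (1 : H)) := by
      intro i _
      calc ∑ j ∈ (ℛ k (r.left i)).index,
            W ((ℛ k (r.left i)).left j ⊗ₜ[k] ((ℛ k (r.left i)).right j ⊗ₜ[k] r.right i))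
          = Pm.sm (φ (Sinv (r.right i))) m' ⊗ₜ[k]
              (∑ j ∈ (ℛ k (r.left i)).index,
                Sinv ((ℛ k (r.left i)).right j) * (ℛ k (r.left i)).left j) := by
            rw [tmul_sum]
            exact Finset.sum_congr rfl fun j _ => hWt _ _ _
        _ = Coalgebra.counit (R := k) (r.left i) •
              (Pm.sm (φ (Sinv (r.right i))) m' ⊗ₜ[k] (1 : H)) := by
            rw [sum_Sinv_right_mul_left Sinv hS1 hS2 (ℛ k (r.left i)), tmul_smul]
    rw [Finset.sum_congr rfl key]
    have : ∀ i ∈ r.index, Coalgebra.counit (R := k) (r.left i) •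
        (Pm.sm (φ (Sinv (r.right i))) m' ⊗ₜ[k] (1 : H))
        = (Pm.sm (φ (Sinv (Coalgebra.counit (R := k) (r.left i) • r.right i))) m') ⊗ₜ[k] (1 : H) := by
      intro i _
      rw [map_smul, map_smul, map_smul, smul_tmul']
      rfl
    rw [Finset.sum_congr rfl this, ← sum_tmul, hLt]
    simp only [flip_apply, TensorProduct.mk_apply]
    congr 1
    conv_rhs => rw [← sum_counit_smul_eq (k := k) r]
    rw [map_sum, map_sum, map_sum, LinearMap.sum_apply]
  have key1 : ∀ m : M, ρM (L (ρM m)) = L (ρM m) ⊗ₜ[k] (1 : H) := by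
    intro m
    have e1 := LinearMap.congr_fun comp1 (ρM m)
    rw [comp_apply] at e1
    rw [e1, comp2, comp_apply, hco m]
    have e2 := LinearMap.congr_fun hpure (ρM m)
    simp only [comp_apply, LinearEquiv.coe_coe] at e2
    rw [e2]
    rfl
  have fix1 : ∀ n : M, L (n ⊗ₜ[k] (1 : H)) = n := by
    intro n
    rw [hLt, TPAux.Sinv_one Sinv hS1, hφone, Pm.sm_one]
  constructor
  · intro m
    calc pMap Pm.sm φ Sinv ρM (pMap Pm.sm φ Sinv ρM m)
        = L (ρM (L (ρM m))) := by rw [hp, hp]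
      _ = L (L (ρM m) ⊗ₜ[k] (1 : H)) := by rw [key1]
      _ = pMap Pm.sm φ Sinv ρM m := by rw [fix1, hp]
  · ext m
    simp only [Set.mem_range, Set.mem_setOf_eq]
    constructor
    · rintro ⟨n, rfl⟩
      rw [hp]
      exact key1 n
    · intro hm
      exact ⟨m, by rw [hp, hm, fix1]⟩
end

section
/- Let H be a Hopf algebra with bijective antipode, A a right H-comodule transposed Poisson algebra, M a transposed Poisson (A,H)-Hopf module, and φ : H → A^A an H-colinear algebra map. If {1,aa'}·p_M(m) = φ(a'₍₁₎)⊳(a·p_M(a'₍₀₎·m)) holds for all a,a' ∈ A, m ∈ M, then M^{coH} ⊆ M^A, i.e. M^{coH} = M^{AcoH}. -/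
open TensorProduct

/-!
A coinvariant `m` is fixed by `p_M`, so hypothesis (3a) at `a' = 1` says `{1,a}·m = 1⊳(a·m)`.
Skew-symmetry and the first module compatibility turn this into `{a,1}·m = a⊳m`. The transposed
Leibniz rule writes `{a,a'} = 2a'{a,1} − {a'a,1}`, and the second module compatibility then
gives `{a,a'}·m = 2a'·(a⊳m) − (a'a)⊳m = a⊳(a'·m)`.
-/

namespace TPA

variable {k A : Type*} [Field k] [CharZero k] [CommRing A] [Algebra k A]

theorem br_eq_two_mul_br_one_sub (P : TPA k A) (a a' : A) :
    P.br a a' = 2 * a' * P.br a 1 - P.br (a' * a) 1 := by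
  have h := P.leibniz a' a 1
  rw [mul_one] at h
  linear_combination -h

end TPA

namespace TPMod

variable {k A : Type*} [Field k] [CharZero k] [CommRing A] [Algebra k A] {P : TPA k A}
  {M : Type*} [AddCommGroup M] [Module k M] (Pm : TPMod k A P M)

theorem sm_br_one_eq_lact {m : M} {b : A}
    (h : Pm.sm (P.br 1 b) m = Pm.lact 1 (Pm.sm b m)) :
    Pm.sm (P.br b 1) m = Pm.lact b m := by
  have h2 := Pm.compat1 b 1 m
  rw [Pm.sm_one, ← h, P.skew 1 b, map_neg, LinearMap.neg_apply, sub_neg_eq_add, two_smul] at h2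
  exact add_right_cancel h2

theorem sm_br_eq_lact_sm {m : M} (h : ∀ b, Pm.sm (P.br b 1) m = Pm.lact b m) (a a' : A) :
    Pm.sm (P.br a a') m = Pm.lact a (Pm.sm a' m) :=
  calc Pm.sm (P.br a a') m
      = 2 • Pm.sm a' (Pm.sm (P.br a 1) m) - Pm.sm (P.br (a' * a) 1) m := by
        rw [P.br_eq_two_mul_br_one_sub, map_sub, LinearMap.sub_apply, mul_assoc, two_mul,
          map_add, LinearMap.add_apply, Pm.sm_mul, two_smul]
    _ = 2 • Pm.sm a' (Pm.lact a m) - Pm.lact (a' * a) m := by rw [h, h]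
    _ = Pm.lact a (Pm.sm a' m) := by rw [Pm.compat2]; abel

end TPMod

theorem pMap_apply_of_coaction_eq_tmul_one {k H A M : Type*} [Field k] [CharZero k]
    [CommRing A] [Algebra k A] [Ring H] [HopfAlgebra k H] [AddCommGroup M] [Module k M]
    {sm : A →ₗ[k] M →ₗ[k] M} {φ : H →ₗ[k] A} {Sinv : H →ₗ[k] H} {ρM : M →ₗ[k] M ⊗[k] H}
    {m : M} (hm : ρM m = m ⊗ₜ[k] 1) :
    pMap sm φ Sinv ρM m = sm (φ (Sinv 1)) m := by
  simp [pMap, hm]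

theorem coinvariants_are_A_invariant_general {k A H : Type*} [Field k] [CharZero k]
    [CommRing A] [Algebra k A] [Ring H] [HopfAlgebra k H] (P : TPA k A)
    (ρA : A →ₗ[k] A ⊗[k] H)
    -- `A` is an `H`-comodule algebra
    (hAone : ρA 1 = 1)
    {M : Type*} [AddCommGroup M] [Module k M] (Pm : TPMod k A P M)
    (ρM : M →ₗ[k] M ⊗[k] H)
    -- the antipode is bijective with inverse `Sinv`
    (Sinv : H →ₗ[k] H)
    (hS1 : ∀ h : H, Sinv (HopfAlgebra.antipode (R := k) h) = h)
    -- `φ : H → A^A` is an `H`-colinear algebra map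
    (φ : H →ₗ[k] A)
    (hφone : φ 1 = 1)
    -- hypothesis (3a): `{1,aa'}·p_M(m) = φ(a'₁) ⊳ (a · p_M(a'₀·m))`
    (h3a : ∀ (a a' : A) (m : M),
      Pm.sm (P.br 1 (a * a')) (pMap Pm.sm φ Sinv ρM m) =
      TensorProduct.lift (((Pm.lact.comp φ).flip).comp
        ((Pm.sm a).comp ((pMap Pm.sm φ Sinv ρM).comp (Pm.sm.flip m)))) (ρA a')) :
    -- conclusion: `M^{coH} ⊆ M^A`, i.e. `M^{coH} = M^{AcoH}`
    ∀ m : M, ρM m = m ⊗ₜ[k] (1 : H) →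
      ∀ a a' : A, Pm.sm (P.br a a') m = Pm.lact a (Pm.sm a' m) := by
  intro m hm
  have hSinv_one : Sinv 1 = 1 := by simpa using hS1 1
  have hpm : pMap Pm.sm φ Sinv ρM m = m := by
    rw [pMap_apply_of_coaction_eq_tmul_one hm, hSinv_one, hφone, Pm.sm_one]
  have hbr_one_left (b : A) : Pm.sm (P.br 1 b) m = Pm.lact 1 (Pm.sm b m) := by
    simpa [hpm, hAone, Algebra.TensorProduct.one_def, hφone, Pm.sm_one] using h3a b 1 m
  exact Pm.sm_br_eq_lact_sm fun b => Pm.sm_br_one_eq_lact (hbr_one_left b)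

theorem coinvariants_are_A_invariant {k A H : Type*} [Field k] [CharZero k]
    [CommRing A] [Algebra k A] [Ring H] [HopfAlgebra k H] (P : TPA k A)
    (ρA : A →ₗ[k] A ⊗[k] H)
    -- `ρA` is a comodule structure map on `A`
    (hAcoassoc : ∀ a : A,
      (TensorProduct.assoc k A H H) ((TensorProduct.map ρA LinearMap.id) (ρA a)) =
        (TensorProduct.map LinearMap.id (Coalgebra.comul (R := k))) (ρA a))
    (hAcounit : ∀ a : A,
      (TensorProduct.rid k A)
        ((TensorProduct.map LinearMap.id (Coalgebra.counit (R := k))) (ρA a)) = a)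
    -- `A` is an `H`-comodule algebra
    (hAone : ρA 1 = 1) (hAmul : ∀ a b : A, ρA (a * b) = ρA a * ρA b)
    -- compatibility of the coaction with the bracket: `ρ({a,a'}) = {a₀,a'₀} ⊗ a₁a'₁`
    (hAbr : ∀ a b : A, ρA (P.br a b) =
      TensorProduct.map₂ P.br (LinearMap.mul k H) (ρA a) (ρA b))
    {M : Type*} [AddCommGroup M] [Module k M] (Pm : TPMod k A P M)
    (ρM : M →ₗ[k] M ⊗[k] H)
    -- `ρM` is a comodule structure map on `M`
    (hMcoassoc : ∀ m : M,
      (TensorProduct.assoc k M H H) ((TensorProduct.map ρM LinearMap.id) (ρM m)) =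
        (TensorProduct.map LinearMap.id (Coalgebra.comul (R := k))) (ρM m))
    (hMcounit : ∀ m : M,
      (TensorProduct.rid k M)
        ((TensorProduct.map LinearMap.id (Coalgebra.counit (R := k))) (ρM m)) = m)
    -- `M` is an `(A,H)`-Hopf module: `ρ(a·m) = a₀·m₀ ⊗ a₁m₁`
    (hsmco : ∀ (a : A) (m : M), ρM (Pm.sm a m) =
      TensorProduct.map₂ Pm.sm (LinearMap.mul k H) (ρA a) (ρM m))
    -- compatibility of the coaction with the Lie action: `ρ(a⊳m) = a₀⊳m₀ ⊗ a₁m₁`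
    (hlactco : ∀ (a : A) (m : M), ρM (Pm.lact a m) =
      TensorProduct.map₂ Pm.lact (LinearMap.mul k H) (ρA a) (ρM m))
    -- the antipode is bijective with inverse `Sinv`
    (Sinv : H →ₗ[k] H)
    (hS1 : ∀ h : H, Sinv (HopfAlgebra.antipode (R := k) h) = h)
    (hS2 : ∀ h : H, HopfAlgebra.antipode (R := k) (Sinv h) = h)
    -- `φ : H → A^A` is an `H`-colinear algebra map
    (φ : H →ₗ[k] A) (hφc : ∀ h : H, φ h ∈ P.center)
    (hφone : φ 1 = 1) (hφmul : ∀ h h' : H, φ (h * h') = φ h * φ h')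
    (hφcolin : ∀ h : H, ρA (φ h) =
      TensorProduct.map φ LinearMap.id (Coalgebra.comul (R := k) h))
    -- hypothesis (3a): `{1,aa'}·p_M(m) = φ(a'₁) ⊳ (a · p_M(a'₀·m))`
    (h3a : ∀ (a a' : A) (m : M),
      Pm.sm (P.br 1 (a * a')) (pMap Pm.sm φ Sinv ρM m) =
      TensorProduct.lift (((Pm.lact.comp φ).flip).comp
        ((Pm.sm a).comp ((pMap Pm.sm φ Sinv ρM).comp (Pm.sm.flip m)))) (ρA a')) :
    -- conclusion: `M^{coH} ⊆ M^A`, i.e. `M^{coH} = M^{AcoH}`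
    ∀ m : M, ρM m = m ⊗ₜ[k] (1 : H) →
      ∀ a a' : A, Pm.sm (P.br a a') m = Pm.lact a (Pm.sm a' m) :=
  coinvariants_are_A_invariant_general P ρA hAone Pm ρM Sinv hS1 φ hφone h3a
end

section
/- Let A be a Poisson H-simple H-comodule transposed Poisson algebra. Then B = A^{AcoH} is a field: every nonzero element of A^{AcoH} is invertible in A and its inverse lies in A^{AcoH}. -/
open TensorProduct

/-!
For a nonzero coinvariant element `b` of the transposed Poisson center, the principal ideal `bA`
is a Poisson `H`-ideal: the transposed Leibniz rule together with centrality gives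
`{a, b y} = b {a, y}`, and coinvariance gives `ρ(b y) = (b ⊗ 1) ρ(y)`. By simplicity `bA = A`,
so `b c = 1` for some `c`; this `c` is central since `c {a, a'} = c b {c a, a'} = {c a, a'}`, and
coinvariant because `ρ` and `a ↦ a ⊗ 1` are algebra maps agreeing on `b`, hence on its inverse.
-/

theorem map_eq_of_map_eq_of_mul_eq_one {M N F : Type*} [CommMonoid M] [Monoid N] [FunLike F M N]
    [MonoidHomClass F M N] (f g : F) {b c : M} (hbc : b * c = 1) (hb : f b = g b) :
    f c = g c :=
  left_inv_eq_right_inv (a := f b) (by rw [← map_mul, mul_comm, hbc, map_one])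
    (by rw [hb, ← map_mul, hbc, map_one])

theorem TensorProduct.map_mem_range_map_range_subtype {R M N P : Type*} [CommSemiring R]
    [AddCommMonoid M] [AddCommMonoid N] [AddCommMonoid P] [Module R M] [Module R N] [Module R P]
    (f : M →ₗ[R] N) (t : M ⊗[R] P) :
    map f LinearMap.id t ∈ LinearMap.range (map (LinearMap.range f).subtype LinearMap.id) :=
  ⟨map f.rangeRestrict LinearMap.id t, by
    rw [← LinearMap.comp_apply, ← map_comp, LinearMap.id_comp, LinearMap.subtype_comp_codRestrict]⟩

namespace TPA

variable {k A : Type*} [Field k] [CharZero k] [CommRing A] [Algebra k A] (P : TPA k A)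

theorem br_mul_left_of_mem_center {b : A} (hb : b ∈ P.center) (a y : A) :
    P.br a (b * y) = b * P.br a y := by
  linear_combination hb a y - P.leibniz b a y

theorem mem_center_of_mul_eq_one {b c : A} (hb : b ∈ P.center) (hbc : b * c = 1) :
    c ∈ P.center := by
  intro a a'
  have hbr : b * P.br (c * a) a' = P.br a a' := by
    rw [hb, ← mul_assoc, hbc, one_mul]
  linear_combination P.br (c * a) a' * hbc - c * hbr

def IsPoissonHIdeal {H : Type*} [AddCommMonoid H] [Module k H] (ρ : A →ₗ[k] A ⊗[k] H)
    (I : Submodule k A) : Prop :=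
  (∀ a : A, ∀ x ∈ I, a * x ∈ I) ∧ (∀ a : A, ∀ x ∈ I, P.br a x ∈ I) ∧
    ∀ x ∈ I, ρ x ∈ LinearMap.range (map I.subtype (LinearMap.id (R := k) (M := H)))

theorem isPoissonHIdeal_range_mulLeft {H : Type*} [Semiring H] [Algebra k H]
    (ρ : A →ₗ[k] A ⊗[k] H) (hmul : ∀ a b : A, ρ (a * b) = ρ a * ρ b) {b : A}
    (hb : b ∈ P.center) (hρb : ρ b = b ⊗ₜ[k] (1 : H)) :
    P.IsPoissonHIdeal ρ (LinearMap.range (LinearMap.mulLeft k b)) := by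
  refine ⟨?_, ?_, ?_⟩
  · rintro a _ ⟨y, rfl⟩
    exact ⟨a * y, mul_left_comm b a y⟩
  · rintro a _ ⟨y, rfl⟩
    exact ⟨P.br a y, (P.br_mul_left_of_mem_center hb a y).symm⟩
  · rintro _ ⟨y, rfl⟩
    have hρ : ρ (b * y) = map (LinearMap.mulLeft k b) LinearMap.id (ρ y) := by
      rw [hmul, hρb, ← LinearMap.mulLeft_apply (R := k), LinearMap.mulLeft_tmul,
        LinearMap.mulLeft_one]
    rw [LinearMap.mulLeft_apply, hρ]
    exact map_mem_range_map_range_subtype _ _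

end TPA

theorem poisson_H_simple_coinvariant_center_is_field_general {k A H : Type*} [Field k]
    [CharZero k] [CommRing A] [Algebra k A] [Ring H]
    [HopfAlgebra k H] (P : TPA k A) (ρA : A →ₗ[k] A ⊗[k] H)
    -- `A` is an `H`-comodule algebra
    (hAone : ρA 1 = 1) (hAmul : ∀ a b : A, ρA (a * b) = ρA a * ρA b)
    -- `A` is Poisson `H`-simple: the only Poisson `H`-ideals are `0` and `A`
    (hsimple : ∀ I : Submodule k A,
      (∀ a : A, ∀ x ∈ I, a * x ∈ I) →
      (∀ a : A, ∀ x ∈ I, P.br a x ∈ I) →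
      (∀ x ∈ I, ρA x ∈ LinearMap.range
        (TensorProduct.map I.subtype (LinearMap.id (R := k) (M := H)))) →
      I = ⊥ ∨ I = ⊤) :
    ∀ b : A, b ∈ P.center → ρA b = b ⊗ₜ[k] (1 : H) → b ≠ 0 →
      ∃ c : A, c ∈ P.center ∧ ρA c = c ⊗ₜ[k] (1 : H) ∧ b * c = 1 := by
  intro b hb hρb hb0
  obtain ⟨hideal, hlie, hcomod⟩ := P.isPoissonHIdeal_range_mulLeft ρA hAmul hb hρb
  rcases hsimple _ hideal hlie hcomod with hbot | htop
  · exact absurd (by simpa using hbot.le ⟨1, mul_one b⟩) hb0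
  obtain ⟨c, hbc⟩ := htop.ge (Submodule.mem_top (x := 1))
  exact ⟨c, P.mem_center_of_mul_eq_one hb hbc,
    map_eq_of_map_eq_of_mul_eq_one (AlgHom.ofLinearMap ρA hAone hAmul)
      Algebra.TensorProduct.includeLeft hbc hρb, hbc⟩

theorem poisson_H_simple_coinvariant_center_is_field {k A H : Type*} [Field k]
    [CharZero k] [CommRing A] [Algebra k A] [Nontrivial A] [Ring H]
    [HopfAlgebra k H] (P : TPA k A) (ρA : A →ₗ[k] A ⊗[k] H)
    -- `ρA` is a comodule structure map on `A`
    (hAcoassoc : ∀ a : A,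
      (TensorProduct.assoc k A H H) ((TensorProduct.map ρA LinearMap.id) (ρA a)) =
        (TensorProduct.map LinearMap.id (Coalgebra.comul (R := k))) (ρA a))
    (hAcounit : ∀ a : A,
      (TensorProduct.rid k A)
        ((TensorProduct.map LinearMap.id (Coalgebra.counit (R := k))) (ρA a)) = a)
    -- `A` is an `H`-comodule algebra
    (hAone : ρA 1 = 1) (hAmul : ∀ a b : A, ρA (a * b) = ρA a * ρA b)
    -- compatibility of the coaction with the bracket: `ρ({a,a'}) = {a₀,a'₀} ⊗ a₁a'₁`
    (hAbr : ∀ a b : A, ρA (P.br a b) =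
      TensorProduct.map₂ P.br (LinearMap.mul k H) (ρA a) (ρA b))
    -- `A` is Poisson `H`-simple: the only Poisson `H`-ideals are `0` and `A`
    (hsimple : ∀ I : Submodule k A,
      (∀ a : A, ∀ x ∈ I, a * x ∈ I) →
      (∀ a : A, ∀ x ∈ I, P.br a x ∈ I) →
      (∀ x ∈ I, ρA x ∈ LinearMap.range
        (TensorProduct.map I.subtype (LinearMap.id (R := k) (M := H)))) →
      I = ⊥ ∨ I = ⊤) :
    ∀ b : A, b ∈ P.center → ρA b = b ⊗ₜ[k] (1 : H) → b ≠ 0 →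
      ∃ c : A, c ∈ P.center ∧ ρA c = c ⊗ₜ[k] (1 : H) ∧ b * c = 1 :=
  poisson_H_simple_coinvariant_center_is_field_general P ρA hAone hAmul hsimple
end

section
/- Let A be a transposed Poisson algebra and b an element of the transposed Poisson center A^A. Then the principal ideal Ab is a Poisson ideal of A: for all a,a' ∈ A, {a',ab} = {a',a}b ∈ Ab. -/
open TensorProduct

namespace TPA

variable {k A : Type*} [Field k] [CharZero k] [CommRing A] [Algebra k A] (P : TPA k A)

theorem br_mul_of_mem_center_s13 {b : A} (hb : b ∈ P.center) (a a' : A) :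
    P.br a' (a * b) = P.br a' a * b :=
  calc P.br a' (a * b) = -P.br (b * a) a' := by rw [P.skew, mul_comm]
    _ = -(b * P.br a a') := by rw [hb]
    _ = P.br a' a * b := by rw [P.skew a a']; ring

end TPA

theorem principal_ideal_of_center_is_poisson_ideal {k A : Type*} [Field k]
    [CharZero k] [CommRing A] [Algebra k A] (P : TPA k A) (b : A)
    (hb : b ∈ P.center) :
    ∀ a a' : A, P.br a' (a * b) = P.br a' a * b ∧
      P.br a' (a * b) ∈ Ideal.span ({b} : Set A) := by
  intro a a'
  have hbr := P.br_mul_of_mem_center_s13 hb a a'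
  exact ⟨hbr, hbr ▸ Ideal.mem_span_singleton'.mpr ⟨_, rfl⟩⟩
end

section
/- Let A be a right H-comodule transposed Poisson algebra, B a subalgebra of A^{AcoH}, M a transposed Poisson (A,H)-Hopf module, and N a B-module. The map ψ sending a transposed Poisson (A,H)-Hopf module morphism f : A⊗_B N → M to the B-linear map n ↦ f(1⊗n) is a bijection onto Hom_B(N, M^{AcoH}), with inverse sending g to the map a⊗n ↦ a·g(n). -/
open TensorProduct

/-- For fixed `n : N`, the `k`-linear map `A → A ⊗[B] N`, `x ↦ x ⊗ n`. -/
noncomputable def tmulRight {k A : Type*} [Field k] [CharZero k] [CommRing A]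
    [Algebra k A] (B : Subalgebra k A) {N : Type*} [AddCommGroup N]
    [Module B N] (n : N) : A →ₗ[k] A ⊗[B] N where
  toFun x := x ⊗ₜ[B] n
  map_add' x y := TensorProduct.add_tmul x y n
  map_smul' r x := by simp [TensorProduct.smul_tmul']

theorem hom_tensor_adjunction_bijection {k A H : Type*} [Field k] [CharZero k]
    [CommRing A] [Algebra k A] [Ring H] [HopfAlgebra k H] (P : TPA k A)
    (ρA : A →ₗ[k] A ⊗[k] H)
    -- `ρA` is a comodule structure map on `A`
    (hAcoassoc : ∀ a : A,
      (TensorProduct.assoc k A H H) ((TensorProduct.map ρA LinearMap.id) (ρA a)) =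
        (TensorProduct.map LinearMap.id (Coalgebra.comul (R := k))) (ρA a))
    (hAcounit : ∀ a : A,
      (TensorProduct.rid k A)
        ((TensorProduct.map LinearMap.id (Coalgebra.counit (R := k))) (ρA a)) = a)
    -- `A` is an `H`-comodule algebra
    (hAone : ρA 1 = 1) (hAmul : ∀ a b : A, ρA (a * b) = ρA a * ρA b)
    -- compatibility of the coaction with the bracket: `ρ({a,a'}) = {a₀,a'₀} ⊗ a₁a'₁`
    (hAbr : ∀ a b : A, ρA (P.br a b) =
      TensorProduct.map₂ P.br (LinearMap.mul k H) (ρA a) (ρA b))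
    -- `B` is a subalgebra of `A^{AcoH}`
    (B : Subalgebra k A) (hBc : ∀ b : B, (b : A) ∈ P.center)
    (hBco : ∀ b : B, ρA (b : A) = (b : A) ⊗ₜ[k] (1 : H))
    {M : Type*} [AddCommGroup M] [Module k M] (Pm : TPMod k A P M)
    (ρM : M →ₗ[k] M ⊗[k] H)
    -- `ρM` is a comodule structure map on `M`
    (hMcoassoc : ∀ m : M,
      (TensorProduct.assoc k M H H) ((TensorProduct.map ρM LinearMap.id) (ρM m)) =
        (TensorProduct.map LinearMap.id (Coalgebra.comul (R := k))) (ρM m))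
    (hMcounit : ∀ m : M,
      (TensorProduct.rid k M)
        ((TensorProduct.map LinearMap.id (Coalgebra.counit (R := k))) (ρM m)) = m)
    -- `M` is an `(A,H)`-Hopf module: `ρ(a·m) = a₀·m₀ ⊗ a₁m₁`
    (hsmco : ∀ (a : A) (m : M), ρM (Pm.sm a m) =
      TensorProduct.map₂ Pm.sm (LinearMap.mul k H) (ρA a) (ρM m))
    -- compatibility of the coaction with the Lie action: `ρ(a⊳m) = a₀⊳m₀ ⊗ a₁m₁`
    (hlactco : ∀ (a : A) (m : M), ρM (Pm.lact a m) =
      TensorProduct.map₂ Pm.lact (LinearMap.mul k H) (ρA a) (ρM m))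
    {N : Type*} [AddCommGroup N] [Module k N] [Module B N]
    [IsScalarTower k B N] :
    -- `ψ : f ↦ (n ↦ f(1 ⊗ n))` is a bijection from the morphisms of
    -- transposed Poisson `(A,H)`-Hopf modules `A ⊗_B N → M` onto
    -- `Hom_B(N, M^{AcoH})`, with inverse `g ↦ (a ⊗ n ↦ a · g(n))`.
    (∀ f : A ⊗[B] N →ₗ[k] M,
      (∀ (a' a : A) (n : N), f ((a' * a) ⊗ₜ[B] n) = Pm.sm a' (f (a ⊗ₜ[B] n))) →
      (∀ (a' a : A) (n : N), f (P.br a' a ⊗ₜ[B] n) = Pm.lact a' (f (a ⊗ₜ[B] n))) →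
      (∀ (a : A) (n : N), ρM (f (a ⊗ₜ[B] n)) =
        TensorProduct.map f LinearMap.id
          ((TensorProduct.map (tmulRight B n) LinearMap.id) (ρA a))) →
      -- `ψ(f)` lands in `M^{AcoH}`, is `B`-linear, and recovers `f`
      (∀ n : N, (∀ a a' : A,
          Pm.sm (P.br a a') (f (1 ⊗ₜ[B] n)) =
            Pm.lact a (Pm.sm a' (f (1 ⊗ₜ[B] n)))) ∧
        ρM (f (1 ⊗ₜ[B] n)) = f (1 ⊗ₜ[B] n) ⊗ₜ[k] (1 : H)) ∧
      (∀ (b : B) (n : N), f (1 ⊗ₜ[B] (b • n)) = Pm.sm (b : A) (f (1 ⊗ₜ[B] n))) ∧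
      (∀ (a : A) (n : N), f (a ⊗ₜ[B] n) = Pm.sm a (f (1 ⊗ₜ[B] n)))) ∧
    (∀ g : N →ₗ[k] M,
      (∀ n : N, (∀ a a' : A,
          Pm.sm (P.br a a') (g n) = Pm.lact a (Pm.sm a' (g n))) ∧
        ρM (g n) = g n ⊗ₜ[k] (1 : H)) →
      (∀ (b : B) (n : N), g (b • n) = Pm.sm (b : A) (g n)) →
      ∃ f : A ⊗[B] N →ₗ[k] M,
        (∀ (a' a : A) (n : N), f ((a' * a) ⊗ₜ[B] n) = Pm.sm a' (f (a ⊗ₜ[B] n))) ∧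
        (∀ (a' a : A) (n : N), f (P.br a' a ⊗ₜ[B] n) = Pm.lact a' (f (a ⊗ₜ[B] n))) ∧
        (∀ (a : A) (n : N), ρM (f (a ⊗ₜ[B] n)) =
          TensorProduct.map f LinearMap.id
            ((TensorProduct.map (tmulRight B n) LinearMap.id) (ρA a))) ∧
        (∀ n : N, f (1 ⊗ₜ[B] n) = g n)) := by

  constructor
  · intro f h1 h2 h3
    refine ⟨fun n => ⟨fun a a' => ?_, ?_⟩, fun b n => ?_, fun a n => ?_⟩
    · have e1 : Pm.sm (P.br a a') (f (1 ⊗ₜ[B] n)) = f (P.br a a' ⊗ₜ[B] n) := by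
        have := h1 (P.br a a') 1 n
        rw [mul_one] at this
        exact this.symm
      have e2 : f (P.br a a' ⊗ₜ[B] n) = Pm.lact a (f (a' ⊗ₜ[B] n)) := h2 a a' n
      have e3 : f (a' ⊗ₜ[B] n) = Pm.sm a' (f (1 ⊗ₜ[B] n)) := by
        have := h1 a' 1 n
        rwa [mul_one] at this
      rw [e1, e2, e3]
    · have := h3 1 n
      rw [hAone, Algebra.TensorProduct.one_def] at this
      have ht : (tmulRight B n) (1 : A) = (1 : A) ⊗ₜ[B] n := rfl
      simpa [ht] using this
    · have e : (1 : A) ⊗ₜ[B] (b • n) = ((b : A) ⊗ₜ[B] n : A ⊗[B] N) := by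
        set_option synthInstance.maxHeartbeats 1000000 in
        rw [← TensorProduct.smul_tmul]
        congr 1
        rw [Algebra.smul_def, mul_one]
        rfl
      rw [e]
      have := h1 (b : A) 1 n
      rwa [mul_one] at this
    · have := h1 a 1 n
      rwa [mul_one] at this
  · intro g hg hgB
    classical
    -- construct the additive lift
    let biadd : A →+ N →+ M := AddMonoidHom.mk'
      (fun a => AddMonoidHom.mk' (fun n => Pm.sm a (g n)) (by intro x y; simp))
      (by intro x y; ext n; simp)
    have hbal : ∀ (b : B) (a : A) (n : N), biadd (b • a) n = biadd a (b • n) := by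
      intro b a n
      simp only [biadd, AddMonoidHom.mk'_apply, hgB]
      rw [Algebra.smul_def]
      have : (algebraMap B A b : A) = (b : A) := rfl
      rw [this, ← Pm.sm_mul, mul_comm]
    let f0 : A ⊗[B] N →+ M := TensorProduct.liftAddHom biadd hbal
    have f0_tmul : ∀ (a : A) (n : N), f0 (a ⊗ₜ[B] n) = Pm.sm a (g n) := by
      intro a n; simp [f0, biadd]
    have fsmul : ∀ (c : k) (x : A ⊗[B] N), f0 (c • x) = c • f0 x := by
      intro c x
      induction x using TensorProduct.induction_on with
      | zero => simp
      | tmul a n =>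
          rw [TensorProduct.smul_tmul', f0_tmul, f0_tmul]
          simp
      | add x y hx hy => rw [smul_add, map_add, hx, hy, map_add, smul_add]
    let f : A ⊗[B] N →ₗ[k] M :=
      { toFun := f0, map_add' := f0.map_add, map_smul' := fsmul }
    have f_tmul : ∀ (a : A) (n : N), f (a ⊗ₜ[B] n) = Pm.sm a (g n) := f0_tmul
    refine ⟨f, fun a' a n => ?_, fun a' a n => ?_, fun a n => ?_, fun n => ?_⟩
    · rw [f_tmul, f_tmul, Pm.sm_mul]
    · rw [f_tmul, f_tmul, (hg n).1 a' a]
    · have key : ∀ x : A ⊗[k] H,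
        TensorProduct.map₂ Pm.sm (LinearMap.mul k H) x (g n ⊗ₜ[k] (1 : H)) =
          TensorProduct.map f LinearMap.id
            ((TensorProduct.map (tmulRight B n) LinearMap.id) x) := by
        intro x
        induction x using TensorProduct.induction_on with
        | zero => simp
        | tmul a0 a1 =>
            have ht : (tmulRight B n) a0 = a0 ⊗ₜ[B] n := rfl
            simp only [TensorProduct.map₂_apply_tmul, TensorProduct.map_tmul,
              LinearMap.id_coe, id_eq, ht, f_tmul, LinearMap.mul_apply', mul_one]
        | add x y hx hy =>
            simp only [map_add, LinearMap.add_apply, hx, hy]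
      rw [f_tmul, hsmco, (hg n).2, key]
    · rw [f_tmul, Pm.sm_one]
end

section
/- Let A be a transposed Poisson algebra and M a transposed Poisson A-module with associative actions, meaning (ab)⊳m = b·(a⊳m) for all a ∈ A, b ∈ A^A, m ∈ M. Then for b ∈ A^A and any a ∈ A, m ∈ M: a⊳(b·m) = 2b·(a⊳m) − (ab)⊳m = b·(a⊳m). -/
open TensorProduct

namespace TPMod

variable {k A : Type*} [Field k] [CharZero k] [CommRing A] [Algebra k A] {P : TPA k A}
  {M : Type*} [AddCommGroup M] [Module k M] (Pm : TPMod k A P M)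

theorem lact_sm_eq (a b : A) (m : M) :
    Pm.lact a (Pm.sm b m) = 2 • Pm.sm b (Pm.lact a m) - Pm.lact (a * b) m := by
  rw [Pm.compat2 b a m, mul_comm b a, add_sub_cancel_left]

theorem lact_sm_comm_of_lact_mul {a b : A} {m : M}
    (h : Pm.lact (a * b) m = Pm.sm b (Pm.lact a m)) :
    Pm.lact a (Pm.sm b m) = Pm.sm b (Pm.lact a m) := by
  rw [lact_sm_eq, h, two_smul, add_sub_cancel_right]

end TPMod

theorem associative_actions_identity {k A : Type*} [Field k] [CharZero k]
    [CommRing A] [Algebra k A] (P : TPA k A) {M : Type*} [AddCommGroup M]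
    [Module k M] (Pm : TPMod k A P M)
    (hassoc : ∀ (a b : A), b ∈ P.center → ∀ m : M,
      Pm.lact (a * b) m = Pm.sm b (Pm.lact a m)) :
    ∀ (a b : A), b ∈ P.center → ∀ m : M,
      Pm.lact a (Pm.sm b m) = 2 • Pm.sm b (Pm.lact a m) - Pm.lact (a * b) m ∧
      Pm.lact a (Pm.sm b m) = Pm.sm b (Pm.lact a m) := by
  intro a b hb m
  exact ⟨Pm.lact_sm_eq a b m, Pm.lact_sm_comm_of_lact_mul (hassoc a b hb m)⟩
end
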